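/- arXiv:0803.2719 — 2 statements merged into one kernel-verified Lean document; each statement's English description precedes it below -/
import Mathlib

section
/- Let F be a summable ball kernel and let φ and ψ be ultrametric wavelets. Then for every x ∈ ℚ_p the double integral defining 𝓘[φ, ψ](x) converges absolutely, i.e. ∫∫ |F(sup(x, ξ, η)) φ(ξ)(ψ(η) − ψ(x))| dμ(ξ) dμ(η) < ∞. -/
/-! Fix `x` and a ball `B = B(x, p^γ₁)` containing the support of `φ`, with `γ₁ ≥ max 0 γψ`.
For `ξ ∈ B` the factor `F(sup(x, ξ, η))` is dominated by a function of `η` alone: when `η ∈ B`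
and `ψ η ≠ ψ x`, `η` lies outside the subball of `x` of radius `p^(γψ-1)` on which `ψ` is
constant, so `sup(x, ξ, η)` has one of the finitely many radii `p^γψ, …, p^γ₁`; when `η ∉ B`,
`sup(x, ξ, η) = sup(x, η)`. Over the complement of `B`, the integral of `‖F(sup(x, η))‖`
decomposes along the spheres `|η - x| = p^γ`, of measure `p^γ - p^(γ-1)` (a ball of radius
`p^γ` is the disjoint union of `p` translates of the ball of radius `p^(γ-1)`), into exactly the
series of the summability condition. Since `φ` and `ψ` are bounded and `φ` is integrable, the
double integral is at most a product of two finite integrals. -/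

open MeasureTheory

/-- The index (base-`p` logarithm of the radius) of the smallest ball of `ℚ_[p]`
containing the two points `x` and `y` (for `x ≠ y`): its radius is `‖x - y‖ = p ^ (-(x-y).valuation)`. -/
noncomputable def supIdx {p : ℕ} [Fact p.Prime] (x y : ℚ_[p]) : ℤ := -(x - y).valuation

/-- The index of the smallest ball containing the three points `x`, `ξ`, `η`
(for pairwise distinct points): its radius is `max (‖x-ξ‖, ‖x-η‖, ‖ξ-η‖)`. -/
noncomputable def sup3Idx {p : ℕ} [Fact p.Prime] (x ξ η : ℚ_[p]) : ℤ :=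
  max (supIdx x ξ) (max (supIdx x η) (supIdx ξ η))

/-- A ball kernel: a function on balls of `ℚ_[p]`, encoded as a function of a center and
an index (log_p of the radius), independent of the choice of center in the ball. -/
def IsBallKernel {p : ℕ} [Fact p.Prime] (F : ℚ_[p] → ℤ → ℂ) : Prop :=
  ∀ c c' : ℚ_[p], ∀ γ : ℤ, dist c c' ≤ (p : ℝ) ^ γ → F c γ = F c' γ

/-- Summability of a ball kernel: for every ball `B(c, p^γ₀)`,
`Σ_{γ > γ₀} ‖F(B(c, p^γ))‖ (p^γ - p^(γ-1)) < ∞`. -/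
def KernelSummable {p : ℕ} [Fact p.Prime] (F : ℚ_[p] → ℤ → ℂ) : Prop :=
  ∀ c : ℚ_[p], ∀ γ₀ : ℤ, Summable (fun n : ℕ =>
    ‖F c (γ₀ + 1 + n)‖ * ((p : ℝ) ^ (γ₀ + 1 + (n : ℤ)) - (p : ℝ) ^ (γ₀ + (n : ℤ))))

/-- An ultrametric wavelet with ball `B(c, p^γ)`: vanishes outside the ball, is constant
on each of the `p` maximal subballs (balls of radius `p^(γ-1)`), has zero mean, and is
not identically zero. -/
def IsWavelet {p : ℕ} [Fact p.Prime] [MeasurableSpace ℚ_[p]] (μ : Measure ℚ_[p])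
    (ψ : ℚ_[p] → ℂ) (c : ℚ_[p]) (γ : ℤ) : Prop :=
  (∀ x, (p : ℝ) ^ γ < dist x c → ψ x = 0) ∧
    (∀ x y, dist x y ≤ (p : ℝ) ^ (γ - 1) → ψ x = ψ y) ∧
    (∫ x, ψ x ∂μ) = 0 ∧ ψ ≠ 0

/-- The eigenvalue `λ_I = T(I) ν(I) + Σ_{J > I} T(J) (ν(J) - ν(J,I))` attached to the ball
`I = B(c, p^γI)` and the ball kernel `T`. -/
noncomputable def lamBall {p : ℕ} [Fact p.Prime] (T : ℚ_[p] → ℤ → ℂ) (c : ℚ_[p]) (γI : ℤ) : ℂ :=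
  T c γI * (((p : ℝ) ^ γI : ℝ) : ℂ) +
    ∑' n : ℕ, T c (γI + 1 + n) *
      (((p : ℝ) ^ (γI + 1 + (n : ℤ)) - (p : ℝ) ^ (γI + (n : ℤ)) : ℝ) : ℂ)

/-- The coefficient `Φ_{I,J}` for balls `J = B(c, p^γJ) ⊊ I = B(c, p^γI)`. -/
noncomputable def PhiIJ {p : ℕ} [Fact p.Prime] (F : ℚ_[p] → ℤ → ℂ) (c : ℚ_[p])
    (γI γJ : ℤ) : ℂ :=
  (((p : ℝ) ^ (2 * (γI - 1)) : ℝ) : ℂ) * F c γI - (((p : ℝ) ^ (2 * γJ) : ℝ) : ℂ) * F c γJ -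
    ∑ γ ∈ Finset.Ioo γJ γI, (((p : ℝ) ^ (2 * γ) - (p : ℝ) ^ (2 * γ - 2) : ℝ) : ℂ) * F c γ

/-- The (spatial) operator of the quadratic cascade equation:
`∫∫ F(sup(x,ξ,η)) f(ξ)(f(η) - f(x)) dμ(ξ) dμ(η) + ∫ G(sup(x,ξ))(f(x) - f(ξ)) dμ(ξ)`. -/
noncomputable def cascadeOp {p : ℕ} [Fact p.Prime] [MeasurableSpace ℚ_[p]]
    (μ : Measure ℚ_[p]) (F G : ℚ_[p] → ℤ → ℂ) (f : ℚ_[p] → ℂ) (x : ℚ_[p]) : ℂ :=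
  (∫ ξ, ∫ η, F x (sup3Idx x ξ η) * (f ξ * (f η - f x)) ∂μ ∂μ) +
    ∫ ξ, G x (supIdx x ξ) * (f x - f ξ) ∂μ

/-- `v` satisfies the quadratic cascade equation
`∂ₜ v(x,t) + ∫∫ F(sup(x,ξ,η)) v(ξ,t)(v(η,t) - v(x,t)) dμ(ξ) dμ(η)
  + ∫ G(sup(x,ξ))(v(x,t) - v(ξ,t)) dμ(ξ) = 0` for all `x ∈ ℚ_p` and all `t > 0`. -/
def SatisfiesCascade {p : ℕ} [Fact p.Prime] [MeasurableSpace ℚ_[p]]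
    (μ : Measure ℚ_[p]) (F G : ℚ_[p] → ℤ → ℂ) (v : ℚ_[p] → ℝ → ℂ) : Prop :=
  ∀ x : ℚ_[p], ∀ t : ℝ, 0 < t →
    HasDerivAt (fun s => v x s) (-(cascadeOp μ F G (fun y => v y t) x)) t

open Metric
open scoped ENNReal NNReal

lemma MeasureTheory.lintegral_lintegral_lt_top_of_le_mul {α β : Type*} [MeasurableSpace α]
    [MeasurableSpace β] {μ : Measure α} {ν : Measure β} {f : α → β → ℝ≥0∞} {a : α → ℝ≥0}
    {b : β → ℝ≥0∞} (hf : ∀ x y, f x y ≤ a x * b y) (ha : ∫⁻ x, a x ∂μ < ⊤)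
    (hb : ∫⁻ y, b y ∂ν < ⊤) : ∫⁻ x, ∫⁻ y, f x y ∂ν ∂μ < ⊤ :=
  calc ∫⁻ x, ∫⁻ y, f x y ∂ν ∂μ ≤ ∫⁻ x, a x * ∫⁻ y, b y ∂ν ∂μ :=
        lintegral_mono fun x => (lintegral_mono (hf x)).trans_eq
          (lintegral_const_mul' _ _ ENNReal.coe_ne_top)
    _ = (∫⁻ x, a x ∂μ) * ∫⁻ y, b y ∂ν := lintegral_mul_const' _ _ hb.ne
    _ < ⊤ := ENNReal.mul_lt_top ha hb

variable {p : ℕ} [Fact p.Prime]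

namespace Padic

lemma one_lt_natCast_prime : (1 : ℝ) < p := mod_cast (Fact.out : p.Prime).one_lt

lemma natCast_prime_pos : (0 : ℝ) < p := zero_lt_one.trans one_lt_natCast_prime

lemma exists_natCast_norm_sub_lt_one {z : ℚ_[p]} (hz : ‖z‖ ≤ 1) : ∃ i < p, ‖z - i‖ < 1 := by
  obtain ⟨i, hip, hi⟩ := PadicInt.exists_mem_range (⟨z, hz⟩ : ℤ_[p])
  rw [IsLocalRing.mem_maximalIdeal, PadicInt.mem_nonunits] at hi
  exact ⟨i, hip, hi⟩

lemma closedBall_eq_biUnion_ball (c : ℚ_[p]) {u : ℚ_[p]} (hu : u ≠ 0) :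
    closedBall c ‖u‖ = ⋃ i ∈ Finset.range p, ball (c + i * u) ‖u‖ := by
  have hu' : 0 < ‖u‖ := norm_pos_iff.mpr hu
  ext y
  simp only [Set.mem_iUnion, Finset.mem_range, mem_closedBall, mem_ball, dist_eq_norm]
  constructor
  · intro hy
    obtain ⟨i, hip, hi⟩ := exists_natCast_norm_sub_lt_one (z := (y - c) / u) <| by
      rwa [norm_div, div_le_one hu']
    refine ⟨i, hip, ?_⟩
    have : y - (c + i * u) = ((y - c) / u - i) * u := by field_simp; ring
    rwa [this, norm_mul, mul_lt_iff_lt_one_left hu']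
  · rintro ⟨i, -, hi⟩
    calc ‖y - c‖ = ‖(y - (c + i * u)) + i * u‖ := by ring_nf
      _ ≤ max ‖y - (c + i * u)‖ ‖(i : ℚ_[p]) * u‖ := Padic.nonarchimedean _ _
      _ ≤ ‖u‖ := max_le hi.le <| by
          rw [norm_mul]
          exact mul_le_of_le_one_left (norm_nonneg _)
            (IsUltrametricDist.norm_natCast_le_one ℚ_[p] i)

lemma pairwiseDisjoint_ball_natCast_mul (c u : ℚ_[p]) :
    (Finset.range p : Set ℕ).PairwiseDisjoint fun i => ball (c + i * u) ‖u‖ := by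
  intro i hi j hj hij
  refine Set.disjoint_left.mpr fun y hyi hyj => hij ?_
  have hdist : ‖(((i : ℤ) - j : ℤ) : ℚ_[p])‖ * ‖u‖ < 1 * ‖u‖ := by
    rw [← norm_mul, one_mul]
    calc ‖(((i : ℤ) - j : ℤ) : ℚ_[p]) * u‖ = dist (c + i * u) (c + j * u) := by
          rw [dist_eq_norm]; push_cast; ring_nf
      _ ≤ max (dist (c + i * u) y) (dist y (c + j * u)) := dist_triangle_max _ _ _
      _ < ‖u‖ := max_lt (by rwa [dist_comm]) hyj
  have hdvd : (p : ℤ) ∣ (i : ℤ) - j :=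
    norm_intCast_lt_one_iff.mp (lt_of_mul_lt_mul_right hdist (norm_nonneg u))
  have hlt : |(i : ℤ) - j| < p := by
    simp only [Finset.coe_range, Set.mem_Iio] at hi hj
    rw [abs_sub_lt_iff]; omega
  exact_mod_cast sub_eq_zero.mp (Int.eq_zero_of_abs_lt_dvd hdvd hlt)

lemma ball_zpow_eq_closedBall (c : ℚ_[p]) (γ : ℤ) :
    ball c ((p : ℝ) ^ γ) = closedBall c ((p : ℝ) ^ (γ - 1)) := by
  ext y
  simp only [mem_ball, mem_closedBall, dist_eq_norm, norm_lt_pow_iff_norm_le_pow_sub_one]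

section HaarMeasure

variable [MeasurableSpace ℚ_[p]] [BorelSpace ℚ_[p]] (μ : Measure ℚ_[p]) [μ.IsAddHaarMeasure]

lemma measure_closedBall_zpow_eq_mul (c : ℚ_[p]) (γ : ℤ) :
    μ (closedBall c ((p : ℝ) ^ γ)) = p * μ (closedBall c ((p : ℝ) ^ (γ - 1))) := by
  have hu : ((p : ℚ_[p]) ^ (-γ)) ≠ 0 := zpow_ne_zero _ (mod_cast (Fact.out : p.Prime).ne_zero)
  have hnorm : ‖(p : ℚ_[p]) ^ (-γ)‖ = (p : ℝ) ^ γ := by rw [norm_p_zpow, neg_neg]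
  rw [← hnorm, closedBall_eq_biUnion_ball c hu,
    measure_biUnion_finset (pairwiseDisjoint_ball_natCast_mul c _)
      fun _ _ => measurableSet_ball]
  simp_rw [Measure.addHaar_ball_center μ _ ‖_‖, Finset.sum_const, Finset.card_range, nsmul_eq_mul,
    hnorm, ball_zpow_eq_closedBall, Measure.addHaar_closedBall_center μ c]

variable {μ} in
lemma measure_closedBall_zpow (hμ : μ (closedBall 0 1) = 1) (c : ℚ_[p]) (γ : ℤ) :
    μ (closedBall c ((p : ℝ) ^ γ)) = ENNReal.ofReal ((p : ℝ) ^ γ) := by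
  have hp₀ : (p : ℝ≥0∞) ≠ 0 := mod_cast (Fact.out : p.Prime).ne_zero
  have hstep (k : ℤ) : ENNReal.ofReal ((p : ℝ) ^ k) = p * ENNReal.ofReal ((p : ℝ) ^ (k - 1)) := by
    rw [← ENNReal.ofReal_natCast p, ← ENNReal.ofReal_mul (Nat.cast_nonneg p), ← zpow_one_add₀
      natCast_prime_pos.ne', add_sub_cancel]
  induction γ using Int.induction_on with
  | zero => simpa [Measure.addHaar_closedBall_center μ c] using hμ
  | succ k ih => rw [measure_closedBall_zpow_eq_mul, hstep, add_sub_cancel_right, ih]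
  | pred k ih =>
    rwa [measure_closedBall_zpow_eq_mul, hstep,
      ENNReal.mul_right_inj hp₀ (ENNReal.natCast_ne_top p)] at ih

variable {μ} in
lemma measure_closedBall_zpow_diff (hμ : μ (closedBall 0 1) = 1) (c : ℚ_[p]) {a b : ℤ}
    (hab : a ≤ b) :
    μ (closedBall c ((p : ℝ) ^ b) \ closedBall c ((p : ℝ) ^ a)) =
      ENNReal.ofReal ((p : ℝ) ^ b - (p : ℝ) ^ a) := by
  rw [measure_sdiff (closedBall_subset_closedBall
      (zpow_le_zpow_right₀ one_lt_natCast_prime.le hab))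
    measurableSet_closedBall.nullMeasurableSet (by simp [measure_closedBall_zpow hμ]),
    measure_closedBall_zpow hμ, measure_closedBall_zpow hμ,
    ENNReal.ofReal_sub _ (by positivity)]

end HaarMeasure

end Padic

lemma dist_eq_zpow_supIdx {x y : ℚ_[p]} (h : x ≠ y) : dist x y = (p : ℝ) ^ supIdx x y := by
  rw [dist_eq_norm, supIdx, Padic.norm_eq_zpow_neg_valuation (sub_ne_zero.mpr h)]

lemma supIdx_le_iff {x y : ℚ_[p]} (h : x ≠ y) {γ : ℤ} :
    supIdx x y ≤ γ ↔ dist x y ≤ (p : ℝ) ^ γ := by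
  rw [dist_eq_zpow_supIdx h, zpow_le_zpow_iff_right₀ Padic.one_lt_natCast_prime]

lemma lt_supIdx_iff {x y : ℚ_[p]} (h : x ≠ y) {γ : ℤ} :
    γ < supIdx x y ↔ (p : ℝ) ^ γ < dist x y := by
  simpa only [not_le] using (supIdx_le_iff h).not

-- The hypothesis `0 ≤ γ` covers `x = y`, where `supIdx x x = 0`.
lemma supIdx_le_of_dist_le {x y : ℚ_[p]} {γ : ℤ} (hγ : 0 ≤ γ) (h : dist x y ≤ (p : ℝ) ^ γ) :
    supIdx x y ≤ γ := by
  obtain rfl | hxy := eq_or_ne x y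
  · simpa [supIdx] using hγ
  · exact (supIdx_le_iff hxy).mpr h

lemma lt_supIdx_of_zpow_lt_dist {x y : ℚ_[p]} {γ : ℤ} (h : (p : ℝ) ^ γ < dist x y) :
    γ < supIdx x y :=
  (lt_supIdx_iff (dist_pos.mp ((zpow_pos Padic.natCast_prime_pos _).trans h))).mpr h

namespace IsWavelet

variable [MeasurableSpace ℚ_[p]] {μ : Measure ℚ_[p]} {ψ : ℚ_[p] → ℂ} {c : ℚ_[p]} {γ : ℤ}

lemma continuous (hψ : IsWavelet μ ψ c γ) : Continuous ψ :=
  IsLocallyConstant.continuous <| (IsLocallyConstant.iff_eventually_eq ψ).mpr fun x =>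
    Filter.mem_of_superset (closedBall_mem_nhds x (zpow_pos Padic.natCast_prime_pos _))
      fun y hy => hψ.2.1 y x hy

lemma zpow_lt_dist_of_ne (hψ : IsWavelet μ ψ c γ) {x y : ℚ_[p]} (h : ψ x ≠ ψ y) :
    (p : ℝ) ^ (γ - 1) < dist x y :=
  not_le.mp fun hxy => h (hψ.2.1 x y hxy)

lemma hasCompactSupport (hψ : IsWavelet μ ψ c γ) : HasCompactSupport ψ :=
  HasCompactSupport.intro (isCompact_closedBall c _) fun y hy => hψ.1 y (not_le.mp hy)

lemma exists_dist_le_zpow_of_ne_zero (hψ : IsWavelet μ ψ c γ) (x : ℚ_[p]) (γ₀ : ℤ) :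
    ∃ γ₁ ≥ γ₀, ∀ ξ, ψ ξ ≠ 0 → dist x ξ ≤ (p : ℝ) ^ γ₁ := by
  obtain ⟨n, hn⟩ := pow_unbounded_of_one_lt (dist x c) (Padic.one_lt_natCast_prime (p := p))
  set γ₁ := max γ₀ (max γ n)
  have hle {a : ℤ} (ha : a ≤ γ₁) : (p : ℝ) ^ a ≤ (p : ℝ) ^ γ₁ :=
    zpow_le_zpow_right₀ Padic.one_lt_natCast_prime.le ha
  refine ⟨γ₁, le_max_left _ _, fun ξ hξ => (dist_triangle_max x c ξ).trans (max_le ?_ ?_)⟩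
  · exact hn.le.trans (by rw [← zpow_natCast]; exact hle (by omega))
  · rw [dist_comm]
    exact (not_lt.mp (mt (hψ.1 ξ) hξ)).trans (hle (by omega))

lemma exists_nnnorm_le (hψ : IsWavelet μ ψ c γ) : ∃ M : ℝ≥0, ∀ y, ‖ψ y‖₊ ≤ M := by
  obtain ⟨C, hC⟩ := hψ.continuous.bounded_above_of_compact_support hψ.hasCompactSupport
  exact ⟨C.toNNReal, fun y => by simpa [← NNReal.coe_le_coe] using Or.inl (hC y)⟩

lemma lintegral_nnnorm_lt_top [BorelSpace ℚ_[p]] [IsFiniteMeasureOnCompacts μ]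
    (hψ : IsWavelet μ ψ c γ) : ∫⁻ y, ‖ψ y‖₊ ∂μ < ⊤ := by
  simpa only [HasFiniteIntegral, enorm_eq_nnnorm] using
    (hψ.continuous.integrable_of_hasCompactSupport (μ := μ) hψ.hasCompactSupport).hasFiniteIntegral

end IsWavelet

section Kernel

variable {F : ℚ_[p] → ℤ → ℂ}

lemma KernelSummable.setLIntegral_compl_closedBall_lt_top [MeasurableSpace ℚ_[p]]
    [BorelSpace ℚ_[p]] {μ : Measure ℚ_[p]} [μ.IsAddHaarMeasure] (hFs : KernelSummable F)
    (hμ : μ (closedBall 0 1) = 1) (x : ℚ_[p]) (γ : ℤ) :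
    ∫⁻ η in (closedBall x ((p : ℝ) ^ γ))ᶜ, (‖F x (supIdx x η)‖₊ : ℝ≥0∞) ∂μ < ⊤ := by
  set shell : ℕ → Set ℚ_[p] := fun n =>
    closedBall x ((p : ℝ) ^ (γ + 1 + n)) \ closedBall x ((p : ℝ) ^ (γ + n))
  have hcover : (closedBall x ((p : ℝ) ^ γ))ᶜ ⊆ ⋃ n, shell n := by
    intro η hη
    rw [Set.mem_compl_iff, mem_closedBall', not_le] at hη
    have hxη : x ≠ η := dist_pos.mp ((zpow_pos Padic.natCast_prime_pos _).trans hη)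
    have hγ := lt_supIdx_of_zpow_lt_dist hη
    refine Set.mem_iUnion.mpr ⟨(supIdx x η - γ - 1).toNat, ?_, ?_⟩
    · rw [mem_closedBall', ← supIdx_le_iff hxη]; omega
    · rw [mem_closedBall', not_le, ← lt_supIdx_iff hxη]; omega
  have hshell (n : ℕ) : ∫⁻ η in shell n, (‖F x (supIdx x η)‖₊ : ℝ≥0∞) ∂μ =
      ‖F x (γ + 1 + n)‖₊ * ENNReal.ofReal ((p : ℝ) ^ (γ + 1 + n) - (p : ℝ) ^ (γ + n)) := by
    rw [← Padic.measure_closedBall_zpow_diff hμ x (by omega), ← setLIntegral_const]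
    refine setLIntegral_congr_fun (measurableSet_closedBall.diff measurableSet_closedBall) ?_
    rintro η ⟨hη_le, hη_gt⟩
    rw [mem_closedBall'] at hη_le
    rw [mem_closedBall', not_le] at hη_gt
    have hxη : x ≠ η := dist_pos.mp ((zpow_pos Padic.natCast_prime_pos _).trans hη_gt)
    have h₁ := (supIdx_le_iff hxη).mpr hη_le
    have h₂ := (lt_supIdx_iff hxη).mpr hη_gt
    simp only [show supIdx x η = γ + 1 + n by omega]
  have hterm_nonneg (n : ℕ) :
      0 ≤ ‖F x (γ + 1 + n)‖ * ((p : ℝ) ^ (γ + 1 + (n : ℤ)) - (p : ℝ) ^ (γ + (n : ℤ))) :=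
    mul_nonneg (norm_nonneg _) <| sub_nonneg.mpr <|
      zpow_le_zpow_right₀ Padic.one_lt_natCast_prime.le (by omega)
  calc ∫⁻ η in (closedBall x ((p : ℝ) ^ γ))ᶜ, (‖F x (supIdx x η)‖₊ : ℝ≥0∞) ∂μ
      ≤ ∑' n, ∫⁻ η in shell n, (‖F x (supIdx x η)‖₊ : ℝ≥0∞) ∂μ :=
        (lintegral_mono_set hcover).trans (lintegral_iUnion_le _ _)
    _ = ENNReal.ofReal (∑' n : ℕ,
          ‖F x (γ + 1 + n)‖ * ((p : ℝ) ^ (γ + 1 + (n : ℤ)) - (p : ℝ) ^ (γ + (n : ℤ)))) := by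
        rw [ENNReal.ofReal_tsum_of_nonneg hterm_nonneg (hFs x γ)]
        simp_rw [hshell, ENNReal.ofReal_mul (norm_nonneg _), ofReal_norm, enorm_eq_nnnorm]
    _ < ⊤ := ENNReal.ofReal_lt_top

noncomputable def kernelMajorant (F : ℚ_[p] → ℤ → ℂ) (x : ℚ_[p]) (γ₀ γ₁ : ℤ) :
    ℚ_[p] → ℝ≥0∞ :=
  (closedBall x ((p : ℝ) ^ γ₁)).indicator (fun _ => ∑ γ ∈ Finset.Icc γ₀ γ₁, (‖F x γ‖₊ : ℝ≥0∞)) +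
    (closedBall x ((p : ℝ) ^ γ₁))ᶜ.indicator fun η => (‖F x (supIdx x η)‖₊ : ℝ≥0∞)

lemma kernelMajorant_of_mem {x η : ℚ_[p]} {γ₀ γ₁ : ℤ} (h : η ∈ closedBall x ((p : ℝ) ^ γ₁)) :
    kernelMajorant F x γ₀ γ₁ η = ∑ γ ∈ Finset.Icc γ₀ γ₁, (‖F x γ‖₊ : ℝ≥0∞) := by
  simp [kernelMajorant, h]

lemma kernelMajorant_of_notMem {x η : ℚ_[p]} {γ₀ γ₁ : ℤ}
    (h : η ∉ closedBall x ((p : ℝ) ^ γ₁)) : kernelMajorant F x γ₀ γ₁ η = ‖F x (supIdx x η)‖₊ := by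
  simp [kernelMajorant, h]

lemma nnnorm_le_kernelMajorant {x ξ η : ℚ_[p]} {γ₀ γ₁ : ℤ} (hγ₁ : 0 ≤ γ₁)
    (hξ : dist x ξ ≤ (p : ℝ) ^ γ₁) (hη : dist x η ≤ (p : ℝ) ^ γ₁ → (p : ℝ) ^ (γ₀ - 1) < dist x η) :
    (‖F x (sup3Idx x ξ η)‖₊ : ℝ≥0∞) ≤ kernelMajorant F x γ₀ γ₁ η := by
  have hξη := supIdx_le_of_dist_le hγ₁ hξ
  by_cases hηB : dist x η ≤ (p : ℝ) ^ γ₁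
  · have hmem : sup3Idx x ξ η ∈ Finset.Icc γ₀ γ₁ := by
      have h₁ := supIdx_le_of_dist_le hγ₁ hηB
      have h₂ := supIdx_le_of_dist_le hγ₁ <|
        (dist_triangle_max ξ x η).trans (max_le (by rwa [dist_comm]) hηB)
      have h₃ := lt_supIdx_of_zpow_lt_dist (hη hηB)
      simp only [sup3Idx, Finset.mem_Icc]
      omega
    rw [kernelMajorant_of_mem (mem_closedBall'.mpr hηB)]
    exact Finset.single_le_sum (f := fun γ => (‖F x γ‖₊ : ℝ≥0∞)) (fun _ _ => zero_le) hmem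
  · rw [not_le] at hηB
    have hxη : x ≠ η := dist_pos.mp ((zpow_pos Padic.natCast_prime_pos _).trans hηB)
    have h₁ := lt_supIdx_of_zpow_lt_dist hηB
    have hdist := (dist_eq_zpow_supIdx hxη).le
    have h₂ : supIdx ξ η ≤ supIdx x η := supIdx_le_of_dist_le (by omega) <|
      (dist_triangle_max ξ x η).trans <|
        max_le (by rw [dist_comm]; exact hξ.trans (hηB.le.trans hdist)) hdist
    have hsup : sup3Idx x ξ η = supIdx x η := by simp only [sup3Idx]; omega
    rw [kernelMajorant_of_notMem fun h => (mem_closedBall'.mp h).not_gt hηB, hsup]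

lemma KernelSummable.lintegral_kernelMajorant_lt_top [MeasurableSpace ℚ_[p]]
    [BorelSpace ℚ_[p]] {μ : Measure ℚ_[p]} [μ.IsAddHaarMeasure] (hFs : KernelSummable F)
    (hμ : μ (closedBall 0 1) = 1) (x : ℚ_[p]) (γ₀ γ₁ : ℤ) :
    ∫⁻ η, kernelMajorant F x γ₀ γ₁ η ∂μ < ⊤ := by
  simp only [kernelMajorant, Pi.add_apply]
  rw [lintegral_add_left (measurable_const.indicator measurableSet_closedBall),
    lintegral_indicator measurableSet_closedBall, lintegral_indicator
      measurableSet_closedBall.compl, setLIntegral_const, Padic.measure_closedBall_zpow hμ]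
  exact ENNReal.add_lt_top.mpr ⟨ENNReal.mul_lt_top (ENNReal.sum_lt_top.mpr fun _ _ =>
    ENNReal.coe_lt_top) ENNReal.ofReal_lt_top, hFs.setLIntegral_compl_closedBall_lt_top hμ x γ₁⟩

end Kernel

theorem I_integral_abs_convergent_general {p : ℕ} [Fact p.Prime]
    [MeasurableSpace ℚ_[p]] [BorelSpace ℚ_[p]]
    (μ : Measure ℚ_[p]) [μ.IsAddHaarMeasure] (hμ : μ (Metric.closedBall 0 1) = 1)
    (F : ℚ_[p] → ℤ → ℂ) (hFs : KernelSummable F)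
    (φ ψ : ℚ_[p] → ℂ) (cφ cψ : ℚ_[p]) (γφ γψ : ℤ)
    (hφ : IsWavelet μ φ cφ γφ) (hψ : IsWavelet μ ψ cψ γψ) :
    ∀ x : ℚ_[p],
      (∫⁻ ξ, ∫⁻ η, ‖F x (sup3Idx x ξ η) * (φ ξ * (ψ η - ψ x))‖₊ ∂μ ∂μ) < ⊤ := by
  intro x
  obtain ⟨M, hM⟩ := hψ.exists_nnnorm_le
  obtain ⟨γ₁, hγ₁, hsupp⟩ := hφ.exists_dist_le_zpow_of_ne_zero x (max 0 γψ)
  refine lintegral_lintegral_lt_top_of_le_mul (a := fun ξ => ‖φ ξ‖₊)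
    (b := fun η => (M + M : ℝ≥0) * kernelMajorant F x γψ γ₁ η) (fun ξ η => ?_)
    hφ.lintegral_nnnorm_lt_top ?_
  · obtain hξ | hξ := eq_or_ne (φ ξ) 0
    · simp [hξ]
    obtain hη | hη := eq_or_ne (ψ η) (ψ x)
    · simp [hη]
    calc (‖F x (sup3Idx x ξ η) * (φ ξ * (ψ η - ψ x))‖₊ : ℝ≥0∞)
        = ‖φ ξ‖₊ * (‖ψ η - ψ x‖₊ * ‖F x (sup3Idx x ξ η)‖₊) := by
          simp only [nnnorm_mul, ENNReal.coe_mul]; ring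
      _ ≤ ‖φ ξ‖₊ * ((M + M : ℝ≥0) * kernelMajorant F x γψ γ₁ η) := by
          gcongr
          · exact_mod_cast (nnnorm_sub_le _ _).trans (add_le_add (hM η) (hM x))
          · exact nnnorm_le_kernelMajorant (by omega) (hsupp ξ hξ) fun _ =>
              hψ.zpow_lt_dist_of_ne hη.symm
  · rw [lintegral_const_mul' _ _ ENNReal.coe_ne_top]
    exact ENNReal.mul_lt_top ENNReal.coe_lt_top (hFs.lintegral_kernelMajorant_lt_top hμ x γψ γ₁)

/-- For a summable ball kernel `F` and ultrametric wavelets `φ`, `ψ`, the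
double integral defining `𝓘[φ,ψ](x)` converges absolutely:
`∫∫ ‖F(sup(x,ξ,η)) φ(ξ)(ψ(η) - ψ(x))‖ dμ(ξ) dμ(η) < ∞`. -/
theorem I_integral_abs_convergent {p : ℕ} [Fact p.Prime]
    [MeasurableSpace ℚ_[p]] [BorelSpace ℚ_[p]]
    (μ : Measure ℚ_[p]) [μ.IsAddHaarMeasure] (hμ : μ (Metric.closedBall 0 1) = 1)
    (F : ℚ_[p] → ℤ → ℂ) (hF : IsBallKernel F) (hFs : KernelSummable F)
    (φ ψ : ℚ_[p] → ℂ) (cφ cψ : ℚ_[p]) (γφ γψ : ℤ)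
    (hφ : IsWavelet μ φ cφ γφ) (hψ : IsWavelet μ ψ cψ γψ) :
    ∀ x : ℚ_[p],
      (∫⁻ ξ, ∫⁻ η, ‖F x (sup3Idx x ξ η) * (φ ξ * (ψ η - ψ x))‖₊ ∂μ ∂μ) < ⊤ :=
  I_integral_abs_convergent_general μ hμ F hFs φ ψ cφ cψ γφ γψ hφ hψ
end

section
/- Let F be a summable ball kernel, let φ be an ultrametric wavelet with ball I and ψ an ultrametric wavelet with ball J, and suppose I is a strict subset of J. Then 𝓘[φ, ψ](x) = 0 for every x ∈ ℚ_p. -/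
open MeasureTheory

/-- The nonlinear interaction integral
`𝓘[φ,ψ](x) = ∫∫ F(sup(x,ξ,η)) φ(ξ)(ψ(η) - ψ(x)) dμ(ξ) dμ(η)`. -/
noncomputable def IIntegral {p : ℕ} [Fact p.Prime] [MeasurableSpace ℚ_[p]]
    (μ : Measure ℚ_[p]) (F : ℚ_[p] → ℤ → ℂ) (φ ψ : ℚ_[p] → ℂ) (x : ℚ_[p]) : ℂ :=
  ∫ ξ, ∫ η, F x (sup3Idx x ξ η) * (φ ξ * (ψ η - ψ x)) ∂μ ∂μ

/-!
Write `𝓘[φ, ψ](x) = ∫ φ(ξ) G(ξ) dξ` with `G(ξ) = ∫ F(sup(x, ξ, η)) (ψ(η) - ψ(x)) dη`. As `φ` has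
mean zero, it suffices that `G` is constant on `I`. If `x ∈ I`, only the `η` outside the maximal
subball of `J` containing `I` contribute, because `ψ` is constant on that subball; for such `η`
and `ξ ∈ I` the smallest ball containing `x, ξ, η` is the one containing `x, η`. If `x ∉ I`, all
triangles being isosceles, that ball does not change when `ξ` moves inside `I`, as long as `η`
avoids finitely many points, a null set for the Haar measure.
-/

theorem integral_mul_eq_zero_of_ae_eq_const {α 𝕜 : Type*} [MeasurableSpace α] [RCLike 𝕜]
    {μ : Measure α} {φ G : α → 𝕜} {C : 𝕜} (hφ : ∫ ξ, φ ξ ∂μ = 0)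
    (hG : ∀ᵐ ξ ∂μ, φ ξ ≠ 0 → G ξ = C) :
    ∫ ξ, φ ξ * G ξ ∂μ = 0 :=
  calc ∫ ξ, φ ξ * G ξ ∂μ = ∫ ξ, φ ξ * C ∂μ := by
        refine integral_congr_ae (hG.mono fun ξ hξ => ?_)
        by_cases h : φ ξ = 0
        · simp [h]
        · simp only [hξ h]
    _ = 0 := by rw [integral_mul_const, hφ, zero_mul]

namespace IsUltrametricDist

variable {X : Type*} [PseudoMetricSpace X] [IsUltrametricDist X]

theorem dist_eq_of_dist_lt {x y z : X} (h : dist y z < dist x z) : dist x y = dist x z := by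
  rw [dist_eq_max_of_dist_ne_dist x z y (by rw [dist_comm z y]; exact h.ne'),
    max_eq_left (by rw [dist_comm z y]; exact h.le)]

theorem lt_of_closedBall_ssubset {x y : X} {r s : ℝ} (hr : 0 ≤ r)
    (h : Metric.closedBall x r ⊂ Metric.closedBall y s) : r < s := by
  by_contra! hsr
  have hx : x ∈ Metric.closedBall y s := h.1 (Metric.mem_closedBall_self hr)
  refine h.2 ?_
  rw [closedBall_eq_of_mem hx]
  exact Metric.closedBall_subset_closedBall hsr

end IsUltrametricDist

section SupIdx

variable {p : ℕ} [Fact p.Prime]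

theorem one_lt_prime_cast : (1 : ℝ) < p := by exact_mod_cast (Fact.out : p.Prime).one_lt

theorem prime_zpow_inj {m n : ℤ} : (p : ℝ) ^ m = (p : ℝ) ^ n ↔ m = n :=
  zpow_right_inj₀ (zero_lt_one.trans one_lt_prime_cast) one_lt_prime_cast.ne'

theorem zpow_supIdx {x y : ℚ_[p]} (h : x ≠ y) : (p : ℝ) ^ supIdx x y = dist x y := by
  rw [dist_eq_norm, supIdx, Padic.norm_eq_zpow_neg_valuation (sub_ne_zero.mpr h)]

theorem zpow_sup3Idx {x ξ η : ℚ_[p]} (hxξ : x ≠ ξ) (hxη : x ≠ η) (hξη : ξ ≠ η) :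
    (p : ℝ) ^ sup3Idx x ξ η = max (dist x ξ) (max (dist x η) (dist ξ η)) := by
  have hmono := zpow_right_mono₀ (one_lt_prime_cast (p := p)).le
  rw [sup3Idx, hmono.map_max, hmono.map_max, zpow_supIdx hxξ, zpow_supIdx hxη, zpow_supIdx hξη]

theorem sup3Idx_eq_supIdx_of_dist_lt {x ξ η : ℚ_[p]} (hxξ : x ≠ ξ)
    (h : dist x ξ < dist x η) : sup3Idx x ξ η = supIdx x η := by
  have hξη : dist ξ η = dist x η := by
    rw [dist_comm ξ η, dist_comm x η]
    exact IsUltrametricDist.dist_eq_of_dist_lt (by rwa [dist_comm ξ x, dist_comm η x])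
  have hxη : x ≠ η := dist_pos.mp (dist_nonneg.trans_lt h)
  have hξη' : ξ ≠ η := dist_pos.mp (hξη ▸ dist_pos.mpr hxη)
  rw [← prime_zpow_inj (p := p), zpow_sup3Idx hxξ hxη hξη', zpow_supIdx hxη, hξη, max_self,
    max_eq_right h.le]

theorem sup3Idx_eq_sup3Idx_of_dist_lt {x ξ η c : ℚ_[p]} (h : dist ξ c < dist x c)
    (hηx : η ≠ x) (hηξ : η ≠ ξ) (hηc : η ≠ c) : sup3Idx x ξ η = sup3Idx x c η := by
  have hxξ : dist x ξ = dist x c := IsUltrametricDist.dist_eq_of_dist_lt h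
  have hxc : x ≠ c := dist_pos.mp (dist_nonneg.trans_lt h)
  rw [← prime_zpow_inj (p := p), zpow_sup3Idx (dist_pos.mp (hxξ ▸ dist_pos.mpr hxc)) hηx.symm
    hηξ.symm, zpow_sup3Idx hxc hηx.symm hηc.symm, hxξ]
  have hξη := dist_triangle_max ξ c η
  have hcη := dist_triangle_max c ξ η
  rw [dist_comm c ξ] at hcη
  grind

end SupIdx

section InnerIntegral

variable {p : ℕ} [Fact p.Prime] [MeasurableSpace ℚ_[p]] (μ : Measure ℚ_[p])

theorem integral_sup3Idx_eq_supIdx {x ξ : ℚ_[p]} (K : ℤ → ℂ) {f : ℚ_[p] → ℂ} (hξx : ξ ≠ x)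
    (hf : ∀ η, dist x η ≤ dist x ξ → f η = 0) :
    ∫ η, K (sup3Idx x ξ η) * f η ∂μ = ∫ η, K (supIdx x η) * f η ∂μ := by
  congr 1 with η
  by_cases hη : dist x η ≤ dist x ξ
  · simp [hf η hη]
  · rw [sup3Idx_eq_supIdx_of_dist_lt hξx.symm (not_le.mp hη)]

theorem integral_sup3Idx_eq_of_dist_lt [NullSingletonClass μ] {x ξ c : ℚ_[p]}
    (g : ℤ → ℚ_[p] → ℂ) (h : dist ξ c < dist x c) :
    ∫ η, g (sup3Idx x ξ η) η ∂μ = ∫ η, g (sup3Idx x c η) η ∂μ := by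
  refine integral_congr_ae ?_
  filter_upwards [μ.ae_ne x, μ.ae_ne ξ, μ.ae_ne c] with η hηx hηξ hηc
  rw [sup3Idx_eq_sup3Idx_of_dist_lt h hηx hηξ hηc]

end InnerIntegral

theorem I_integral_strict_subset_general {p : ℕ} [Fact p.Prime]
    [MeasurableSpace ℚ_[p]] [BorelSpace ℚ_[p]]
    (μ : Measure ℚ_[p]) [μ.IsAddHaarMeasure]
    (F : ℚ_[p] → ℤ → ℂ)
    (φ ψ : ℚ_[p] → ℂ) (cI cJ : ℚ_[p]) (γI γJ : ℤ)
    (hφ : IsWavelet μ φ cI γI) (hψ : IsWavelet μ ψ cJ γJ)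
    (hsub : Metric.closedBall cI ((p : ℝ) ^ γI) ⊂ Metric.closedBall cJ ((p : ℝ) ^ γJ)) :
    ∀ x : ℚ_[p], IIntegral μ F φ ψ x = 0 := by
  intro x
  obtain ⟨hφ_out, -, hφ_mean, -⟩ := hφ
  obtain ⟨-, hψ_const, -, -⟩ := hψ
  have hγ : γI < γJ := (zpow_lt_zpow_iff_right₀ one_lt_prime_cast).mp
    (IsUltrametricDist.lt_of_closedBall_ssubset (zpow_nonneg (by positivity) _) hsub)
  have hφ_supp : ∀ ξ, φ ξ ≠ 0 → dist ξ cI ≤ (p : ℝ) ^ γI :=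
    fun ξ hξ => not_lt.mp (mt (hφ_out ξ) hξ)
  have hfactor : IIntegral μ F φ ψ x =
      ∫ ξ, φ ξ * ∫ η, F x (sup3Idx x ξ η) * (ψ η - ψ x) ∂μ ∂μ := by
    simp_rw [IIntegral, ← integral_const_mul, mul_left_comm]
  rw [hfactor]
  by_cases hx : dist x cI ≤ (p : ℝ) ^ γI
  · apply integral_mul_eq_zero_of_ae_eq_const hφ_mean
    filter_upwards [μ.ae_ne x] with ξ hξx hξ
    refine integral_sup3Idx_eq_supIdx μ _ hξx fun η hη => sub_eq_zero.mpr (hψ_const η x ?_)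
    calc dist η x ≤ dist x ξ := by rwa [dist_comm]
      _ ≤ max (dist x cI) (dist cI ξ) := dist_triangle_max x cI ξ
      _ ≤ (p : ℝ) ^ γI := max_le hx (by rw [dist_comm]; exact hφ_supp ξ hξ)
      _ ≤ (p : ℝ) ^ (γJ - 1) := zpow_le_zpow_right₀ one_lt_prime_cast.le (by omega)
  · apply integral_mul_eq_zero_of_ae_eq_const hφ_mean
    refine .of_forall fun ξ hξ => ?_
    exact integral_sup3Idx_eq_of_dist_lt μ (fun γ η => F x γ * (ψ η - ψ x))
      ((hφ_supp ξ hξ).trans_lt (not_le.mp hx))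

/-- If the ball `I` of `φ` is a strict subset of the ball `J` of `ψ`,
then `𝓘[φ,ψ](x) = 0` for every `x`. -/
theorem I_integral_strict_subset {p : ℕ} [Fact p.Prime]
    [MeasurableSpace ℚ_[p]] [BorelSpace ℚ_[p]]
    (μ : Measure ℚ_[p]) [μ.IsAddHaarMeasure] (hμ : μ (Metric.closedBall 0 1) = 1)
    (F : ℚ_[p] → ℤ → ℂ) (hF : IsBallKernel F) (hFs : KernelSummable F)
    (φ ψ : ℚ_[p] → ℂ) (cI cJ : ℚ_[p]) (γI γJ : ℤ)
    (hφ : IsWavelet μ φ cI γI) (hψ : IsWavelet μ ψ cJ γJ)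
    (hsub : Metric.closedBall cI ((p : ℝ) ^ γI) ⊂ Metric.closedBall cJ ((p : ℝ) ^ γJ)) :
    ∀ x : ℚ_[p], IIntegral μ F φ ψ x = 0 :=
  I_integral_strict_subset_general μ F φ ψ cI cJ γI γJ hφ hψ hsub
end
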